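/- arXiv:0708.2897 — 4 statements merged into one kernel-verified Lean document; each statement's English description precedes it below -/
import Mathlib

section
/- For real numbers t_1, ..., t_M, one has 1 - cos(t_1 + ... + t_M) ≤ (2M - 1) · Σ_{i=1}^{M} (1 - cos(t_i)). -/
/-!
Since `1 - cos x = 2 sin² (x / 2)` and `x ↦ |sin x|` is subadditive,
`1 - cos (∑ tᵢ) ≤ 2 (∑ |sin (tᵢ / 2)|)²`, and Cauchy–Schwarz bounds this by
`M · 2 ∑ sin² (tᵢ / 2) = M ∑ (1 - cos tᵢ)`. The constant `M` is at most `2M - 1` once `M ≥ 1`,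
and for `M = 0` both sides vanish.
-/

open Finset

namespace Real

lemma one_sub_cos_eq_two_mul_sin_sq_half (x : ℝ) : 1 - cos x = 2 * sin (x / 2) ^ 2 := by
  rw [sin_sq_eq_half_sub, mul_div_cancel₀ x two_ne_zero]
  ring

lemma abs_sin_add_le (x y : ℝ) : |sin (x + y)| ≤ |sin x| + |sin y| := by
  rw [sin_add]
  calc |sin x * cos y + cos x * sin y| ≤ |sin x| * |cos y| + |cos x| * |sin y| := by
        simpa only [abs_mul] using abs_add_le (sin x * cos y) (cos x * sin y)
    _ ≤ |sin x| * 1 + 1 * |sin y| := by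
        gcongr <;> [exact abs_cos_le_one y; exact abs_cos_le_one x]
    _ = |sin x| + |sin y| := by ring

lemma abs_sin_sum_le {ι : Type*} (s : Finset ι) (f : ι → ℝ) :
    |sin (∑ i ∈ s, f i)| ≤ ∑ i ∈ s, |sin (f i)| :=
  le_sum_of_subadditive (fun x ↦ |sin x|) (by simp) abs_sin_add_le s f

lemma one_sub_cos_sum_le_card_mul {ι : Type*} (s : Finset ι) (f : ι → ℝ) :
    1 - cos (∑ i ∈ s, f i) ≤ #s * ∑ i ∈ s, (1 - cos (f i)) := by
  simp only [one_sub_cos_eq_two_mul_sin_sq_half, ← mul_sum, sum_div]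
  calc 2 * sin (∑ i ∈ s, f i / 2) ^ 2 = 2 * |sin (∑ i ∈ s, f i / 2)| ^ 2 := by rw [sq_abs]
    _ ≤ 2 * (∑ i ∈ s, |sin (f i / 2)|) ^ 2 := by gcongr; exact abs_sin_sum_le _ _
    _ ≤ 2 * (#s * ∑ i ∈ s, |sin (f i / 2)| ^ 2) := by gcongr; exact sq_sum_le_card_mul_sum_sq
    _ = #s * (2 * ∑ i ∈ s, sin (f i / 2) ^ 2) := by simp only [sq_abs]; ring

end Real

theorem stmt1_general (M : ℕ) (t : Fin M → ℝ) :
    1 - Real.cos (∑ i, t i) ≤ (2 * (M : ℝ) - 1) * ∑ i, (1 - Real.cos (t i)) := by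
  rcases M.eq_zero_or_pos with rfl | hM
  · simp
  have hbound := Real.one_sub_cos_sum_le_card_mul univ t
  rw [card_univ, Fintype.card_fin] at hbound
  have hsum_nonneg : 0 ≤ ∑ i, (1 - Real.cos (t i)) :=
    sum_nonneg fun i _ ↦ sub_nonneg.2 (Real.cos_le_one _)
  have hM_le : (M : ℝ) ≤ 2 * M - 1 := by
    have : (1 : ℝ) ≤ M := by exact_mod_cast hM
    linarith
  exact hbound.trans (mul_le_mul_of_nonneg_right hM_le hsum_nonneg)

/-- Basic cosine-splitting lemma: for reals `t 1, …, t M`,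
`1 - cos (t 1 + ⋯ + t M) ≤ (2M - 1) Σ_i (1 - cos (t i))`. -/
theorem stmt1 (M : ℕ) (hM : 1 ≤ M) (t : Fin M → ℝ) :
    1 - Real.cos (∑ i, t i) ≤ (2 * (M : ℝ) - 1) * ∑ i, (1 - Real.cos (t i)) :=
  stmt1_general M t
end

section
/- Consider oriented (space-time) percolation on ℤ^d × ℤ₊ with bond occupation probability p. For bonds b, b' and vertices y, x, the event E(b, x; C̃^b(y)) — namely that b → x with x in the cluster C̃^b(y), and no pivotal bond b' for {b̄ → x} has its bottom endpoint in C̃^b(y) — is contained in the event { y → x } ∘ { b → x }, where ∘ denotes disjoint occurrence (the two connection events occur on disjoint bond sets). -/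
open MeasureTheory
open scoped ENNReal

/-- Space-time vertices of oriented percolation on `ℤ^d × ℤ`. -/
abbrev Vert (d : ℕ) := (Fin d → ℤ) × ℤ
/-- Oriented bonds. -/
abbrev Bond (d : ℕ) := Vert d × Vert d
/-- Bond configurations. -/
abbrev Config (d : ℕ) := Bond d → Bool

variable {d : ℕ}

/-- The bond `b` is occupied in `ω`. -/
def Occ (ω : Config d) (b : Bond d) : Prop := ω b = true

/-- `Conn ω u x`: `u → x`, i.e. there is a path of occupied oriented bonds from `u` to `x`. -/
inductive Conn (ω : Config d) : Vert d → Vert d → Prop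
  | refl (v : Vert d) : Conn ω v v
  | step {u v w : Vert d} : Occ ω (u, v) → Conn ω v w → Conn ω u w

/-- The connection event `{u → x}`. -/
def connEvent (u x : Vert d) : Set (Config d) := {ω | Conn ω u x}

/-- The event `{b → x}`: `b` is occupied and its top endpoint is connected to `x`. -/
def bondConnEvent (b : Bond d) (x : Vert d) : Set (Config d) :=
  {ω | Occ ω b ∧ Conn ω b.2 x}

/-- `E` occurs on the bond set `B` in configuration `ω`. -/
def OccursOn (E : Set (Config d)) (B : Set (Bond d)) (ω : Config d) : Prop :=
  ∀ ω' : Config d, (∀ b ∈ B, ω' b = ω b) → ω' ∈ E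

/-- Disjoint occurrence `E₁ ∘ E₂`. -/
def DisjOcc (E₁ E₂ : Set (Config d)) : Set (Config d) :=
  {ω | ∃ B₁ B₂ : Set (Bond d), Disjoint B₁ B₂ ∧ OccursOn E₁ B₁ ω ∧ OccursOn E₂ B₂ ω}

/-- Triple disjoint occurrence `E₁ ∘ E₂ ∘ E₃`. -/
def DisjOcc3 (E₁ E₂ E₃ : Set (Config d)) : Set (Config d) :=
  {ω | ∃ B₁ B₂ B₃ : Set (Bond d), Disjoint B₁ B₂ ∧ Disjoint B₁ B₃ ∧ Disjoint B₂ B₃ ∧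
    OccursOn E₁ B₁ ω ∧ OccursOn E₂ B₂ ω ∧ OccursOn E₃ B₃ ω}

/-- The double-connection event `{u ⇒ v}`: two bond-disjoint occupied paths from `u` to `v`. -/
def DoubleConn (u v : Vert d) : Set (Config d) := DisjOcc (connEvent u v) (connEvent u v)

/-- Configuration with the status of bond `b` set to `val`. -/
def flipBond (ω : Config d) (b : Bond d) (val : Bool) : Config d :=
  fun b' => if b' = b then val else ω b'

/-- `b ∈ piv(v, x)`: `b` is pivotal for `{v → x}` in `ω`. -/
def Pivotal (ω : Config d) (b : Bond d) (v x : Vert d) : Prop :=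
  Conn (flipBond ω b true) v x ∧ ¬ Conn (flipBond ω b false) v x

/-- Connection avoiding the bond `b`. -/
inductive ConnAvoid (ω : Config d) (b : Bond d) : Vert d → Vert d → Prop
  | refl (v : Vert d) : ConnAvoid ω b v v
  | step {u v w : Vert d} : (u, v) ≠ b → Occ ω (u, v) → ConnAvoid ω b v w →
      ConnAvoid ω b u w

/-- `C̃^b(y)`: vertices reachable from `y` without using the bond `b`. -/
def tilC (ω : Config d) (b : Bond d) (y : Vert d) : Set (Vert d) :=
  {x | ConnAvoid ω b y x}

/-- The lace-expansion event `E(b, x; C̃^b(y))`: `b → x` with `x ∈ C̃^b(y)` and no pivotal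
bond for `{b̄ → x}` has its bottom endpoint in `C̃^b(y)`. -/
def Eevent (b : Bond d) (x y : Vert d) : Set (Config d) :=
  {ω | Occ ω b ∧ Conn ω b.2 x ∧ x ∈ tilC ω b y ∧
    ∀ b' : Bond d, Pivotal ω b' b.2 x → b'.1 ∉ tilC ω b y}

/-! Let `G` be the occupied bonds other than `b`. The hypothesis says that no bond of `G` reachable
from `y` is a cut bond for `b̄ → x` in `G`. By the augmenting-path argument behind Menger's theorem,
the residual graph of a shortest `b̄ → x` path then connects `y` to `x`, and the union of the two
paths, with opposite bonds cancelled, has net flow `δ_{b̄} + δ_y - 2 δ_x`; it therefore splits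
into bond-disjoint `b̄ → x` and `y → x` trails. Adding `b` to the first gives `{b → x}`, and the
second avoids `b`. -/

section Walks

variable {V : Type*}

inductive IsWalk (E : Set (V × V)) : V → V → List (V × V) → Prop
  | nil (v : V) : IsWalk E v v []
  | cons {u v w : V} {l : List (V × V)} :
      (u, v) ∈ E → IsWalk E v w l → IsWalk E u w ((u, v) :: l)

def Reaches (E : Set (V × V)) (u x : V) : Prop := ∃ l, IsWalk E u x l

def IsShortestWalk (E : Set (V × V)) (u x : V) (l : List (V × V)) : Prop :=
  IsWalk E u x l ∧ ∀ l', IsWalk E u x l' → l.length ≤ l'.length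

namespace IsWalk

variable {E E' : Set (V × V)} {u w x : V} {e : V × V} {l l₁ l₂ : List (V × V)}

theorem mem (hw : IsWalk E u x l) (he : e ∈ l) : e ∈ E := by
  induction hw with
  | nil => cases he
  | cons hE _ ih =>
    rcases List.mem_cons.1 he with rfl | he
    · exact hE
    · exact ih he

theorem restrict (hw : IsWalk E u x l) (h : ∀ e ∈ l, e ∈ E') : IsWalk E' u x l := by
  induction hw with
  | nil v => exact .nil v
  | cons _ _ ih =>
    exact .cons (h _ List.mem_cons_self) (ih fun e he => h e (List.mem_cons_of_mem _ he))

theorem mono (hw : IsWalk E u x l) (h : E ⊆ E') : IsWalk E' u x l :=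
  hw.restrict fun _ he => h (hw.mem he)

theorem append (h₁ : IsWalk E u w l₁) (h₂ : IsWalk E w x l₂) : IsWalk E u x (l₁ ++ l₂) := by
  induction h₁ with
  | nil => exact h₂
  | cons hE _ ih => exact .cons hE (ih h₂)

theorem of_cons (hw : IsWalk E u x (e :: l)) : e.1 = u ∧ e ∈ E ∧ IsWalk E e.2 x l := by
  cases hw with
  | cons hE hw => exact ⟨rfl, hE, hw⟩

theorem of_append_cons (hw : IsWalk E u x (l₁ ++ e :: l₂)) :
    IsWalk E u e.1 l₁ ∧ IsWalk E e.2 x l₂ := by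
  induction l₁ generalizing u with
  | nil =>
    obtain ⟨rfl, -, hw⟩ := hw.of_cons
    exact ⟨.nil _, hw⟩
  | cons f t ih =>
    obtain ⟨rfl, hE, hw⟩ := hw.of_cons
    obtain ⟨h₁, h₂⟩ := ih hw
    exact ⟨.cons hE h₁, h₂⟩

theorem reaches_fst (hw : IsWalk E u x l) (he : e ∈ l) : Reaches E u e.1 := by
  obtain ⟨l₁, l₂, rfl⟩ := List.append_of_mem he
  exact ⟨l₁, hw.of_append_cons.1⟩

theorem exists_exit {S : Set V} (hw : IsWalk E u x l) (hu : u ∈ S) (hx : x ∉ S) :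
    ∃ e ∈ l, e.1 ∈ S ∧ e.2 ∉ S := by
  induction hw with
  | nil => exact absurd hu hx
  | @cons u w _ _ _ _ ih =>
    by_cases hw : w ∈ S
    · obtain ⟨e, he, hexit⟩ := ih hw hx
      exact ⟨e, List.mem_cons_of_mem _ he, hexit⟩
    · exact ⟨(u, w), List.mem_cons_self, hu, hw⟩

theorem fst_notMem {S : Set V} (hw : IsWalk E u x l) (hu : u ∉ S)
    (hS : ∀ e ∈ l, e.2 ∈ S → e.1 ∈ S) : ∀ e ∈ l, e.1 ∉ S := by
  induction hw with
  | nil => simp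
  | @cons u w _ _ _ _ ih =>
    have hw : w ∉ S := fun hw => hu (hS _ List.mem_cons_self hw)
    intro e he
    rcases List.mem_cons.1 he with rfl | he
    · exact hu
    · exact ih hw (fun f hf => hS f (List.mem_cons_of_mem _ hf)) e he

theorem exit_unique {S : Set V} (hw : IsWalk E u x l) (hS : ∀ e ∈ l, e.2 ∈ S → e.1 ∈ S)
    {f : V × V} (he : e ∈ l) (hf : f ∈ l) (he' : e.1 ∈ S ∧ e.2 ∉ S) (hf' : f.1 ∈ S ∧ f.2 ∉ S) :
    e = f := by
  induction hw with
  | nil => cases he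
  | @cons u w _ _ _ ht ih =>
    have hS' : ∀ g ∈ _, (g : V × V).2 ∈ S → g.1 ∈ S := fun g hg =>
      hS g (List.mem_cons_of_mem _ hg)
    rcases List.mem_cons.1 he with rfl | he <;> rcases List.mem_cons.1 hf with rfl | hf
    · rfl
    · exact absurd hf'.1 (ht.fst_notMem he'.2 hS' f hf)
    · exact absurd he'.1 (ht.fst_notMem hf'.2 hS' e he)
    · exact ih hS' he hf

end IsWalk

namespace IsShortestWalk

variable {E : Set (V × V)} {u x : V} {l : List (V × V)}

theorem tail {e : V × V} (hl : IsShortestWalk E u x (e :: l)) : IsShortestWalk E e.2 x l := by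
  obtain ⟨rfl, hE, hw⟩ := hl.1.of_cons
  refine ⟨hw, fun l' hl' => ?_⟩
  simpa using hl.2 _ (.cons hE hl')

theorem nodup (hl : IsShortestWalk E u x l) : l.Nodup := by
  induction l generalizing u with
  | nil => exact List.nodup_nil
  | cons e t ih =>
    refine List.nodup_cons.2 ⟨fun he => ?_, ih hl.tail⟩
    obtain ⟨t₁, t₂, rfl⟩ := List.append_of_mem he
    have hshort := hl.tail.2 t₂ hl.tail.1.of_append_cons.2
    simp only [List.length_append, List.length_cons] at hshort
    omega

theorem snd_ne (hl : IsShortestWalk E u x l) : ∀ e ∈ l, e.2 ≠ u := by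
  rintro e he rfl
  obtain ⟨l₁, l₂, rfl⟩ := List.append_of_mem he
  have hshort := hl.2 l₂ hl.1.of_append_cons.2
  simp only [List.length_append, List.length_cons] at hshort
  omega

end IsShortestWalk

theorem Reaches.exists_shortestWalk {E : Set (V × V)} {u x : V} (h : Reaches E u x) :
    ∃ l, IsShortestWalk E u x l := by
  obtain ⟨l, hl, hmin⟩ := (measure List.length).wf.has_min {l | IsWalk E u x l} h
  exact ⟨l, hl, fun l' hl' => not_lt.1 (hmin l' hl')⟩

theorem Reaches.snoc {E : Set (V × V)} {u : V} {f : V × V} (h : Reaches E u f.1) (hf : f ∈ E) :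
    Reaches E u f.2 := by
  obtain ⟨l, hl⟩ := h
  exact ⟨l ++ [f], hl.append (.cons hf (.nil f.2))⟩

end Walks

def residualEdges {V : Type*} (G : Set (V × V)) (ρ : List (V × V)) : Set (V × V) :=
  {f | f ∈ G ∧ f ∉ ρ} ∪ {f | f.swap ∈ ρ}

theorem reaches_residualEdges {V : Type*} {G : Set (V × V)} {v x y : V} {ρ : List (V × V)}
    (hρ : IsWalk G v x ρ) (hy : Reaches G y x)
    (hcut : ∀ e, Reaches G y e.1 → ∃ l, IsWalk G v x l ∧ e ∉ l) :
    Reaches (residualEdges G ρ) y x := by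
  -- Otherwise the set `S` reachable from `y` in the residual graph is left by `ρ` exactly once,
  -- through an edge `g` that is then the only edge of `G` leaving `S`; but `g` is reachable from
  -- `y`, so some `v`-`x` walk avoids it, and that walk must leave `S` elsewhere.
  by_contra hx
  set S : Set V := {z | Reaches (residualEdges G ρ) y z}
  have hyS : y ∈ S := ⟨[], .nil y⟩
  have hexit : ∀ g ∈ G, g.1 ∈ S ∧ g.2 ∉ S → g ∈ ρ := fun g hg ⟨hg₁, hg₂⟩ => by
    by_contra hgρ
    exact hg₂ (Reaches.snoc hg₁ (Or.inl ⟨hg, hgρ⟩))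
  have hρS : ∀ e ∈ ρ, e.2 ∈ S → e.1 ∈ S := fun e he he₂ =>
    Reaches.snoc (f := e.swap) he₂ (Or.inr he)
  obtain ⟨π, hπ⟩ := hy
  obtain ⟨g, hgπ, hg⟩ := hπ.exists_exit hyS hx
  have hgρ : g ∈ ρ := hexit g (hπ.mem hgπ) hg
  have hvS : v ∈ S := by
    by_contra hvS
    exact hρ.fst_notMem hvS hρS g hgρ hg.1
  obtain ⟨l, hl, hgl⟩ := hcut g (hπ.reaches_fst hgπ)
  obtain ⟨g', hg'l, hg'⟩ := hl.exists_exit hvS hx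
  have : g' = g := hρ.exit_unique hρS (hexit g' (hl.mem hg'l) hg') hgρ hg' hg
  exact hgl (this ▸ hg'l)

section NetFlow

variable {V : Type*} [DecidableEq V]

def netFlow (K : Finset (V × V)) : V → ℤ :=
  ∑ e ∈ K, (Pi.single e.1 1 - Pi.single e.2 1)

theorem netFlow_union {A B : Finset (V × V)} (h : Disjoint A B) :
    netFlow (A ∪ B) = netFlow A + netFlow B :=
  Finset.sum_union h

theorem netFlow_sdiff {A B : Finset (V × V)} (h : B ⊆ A) :
    netFlow (A \ B) = netFlow A - netFlow B :=
  Finset.sum_sdiff_eq_sub h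

theorem netFlow_erase {K : Finset (V × V)} {e : V × V} (h : e ∈ K) :
    netFlow (K.erase e) = netFlow K - (Pi.single e.1 1 - Pi.single e.2 1) :=
  Finset.sum_erase_eq_sub h

theorem netFlow_image_swap (K : Finset (V × V)) : netFlow (K.image Prod.swap) = -netFlow K := by
  rw [netFlow, Finset.sum_image fun _ _ _ _ h => Prod.swap_injective h, netFlow,
    ← Finset.sum_neg_distrib]
  simp

theorem netFlow_filter_add_filter_not (K : Finset (V × V)) (p : V × V → Prop) [DecidablePred p] :
    netFlow (K.filter p) + netFlow (K.filter fun e => ¬p e) = netFlow K :=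
  Finset.sum_filter_add_sum_filter_not _ _ _

theorem IsWalk.netFlow_toFinset {E : Set (V × V)} {u x : V} {l : List (V × V)}
    (hw : IsWalk E u x l) (hl : l.Nodup) : netFlow l.toFinset = Pi.single u 1 - Pi.single x 1 := by
  rw [netFlow, List.sum_toFinset _ hl]
  induction hw with
  | nil => simp
  | cons _ _ ih =>
    rw [List.map_cons, List.sum_cons, ih (List.nodup_cons.1 hl).2]
    abel

theorem exists_mem_fst_eq_of_netFlow_pos {K : Finset (V × V)} {a : V} (h : 0 < netFlow K a) :
    ∃ e ∈ K, e.1 = a := by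
  by_contra! hK
  refine h.not_ge ?_
  rw [netFlow, Finset.sum_apply]
  refine Finset.sum_nonpos fun e he => ?_
  simp only [Pi.sub_apply, Pi.single_apply, if_neg (Ne.symm (hK e he))]
  split_ifs <;> norm_num

/-- Leaving `a` along an edge of `K` and deleting that edge preserves the hypothesis, with the
other end of the edge as the new start. -/
theorem exists_nodup_walk_of_netFlow (K : Finset (V × V)) {a x : V}
    (h : ∀ z ≠ x, (Pi.single a 1 : V → ℤ) z ≤ netFlow K z) : ∃ l, l.Nodup ∧ IsWalk ↑K a x l := by
  induction K using Finset.strongInduction generalizing a with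
  | H K ih =>
  by_cases hax : a = x
  · exact ⟨[], List.nodup_nil, hax ▸ .nil a⟩
  obtain ⟨e, he, rfl⟩ := exists_mem_fst_eq_of_netFlow_pos
    (one_pos.trans_le (by simpa using h a hax))
  have hK : ∀ z ≠ x, (Pi.single e.2 1 : V → ℤ) z ≤ netFlow (K.erase e) z := fun z hz => by
    rw [netFlow_erase he, Pi.sub_apply, Pi.sub_apply]
    linarith [h z hz]
  obtain ⟨l, hl, hw⟩ := ih _ (Finset.erase_ssubset he) hK
  exact ⟨e :: l, List.nodup_cons.2 ⟨fun hel => Finset.notMem_erase e K (hw.mem hel), hl⟩,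
    .cons he (hw.mono (Finset.coe_subset.2 (Finset.erase_subset e K)))⟩

end NetFlow

theorem exists_disjoint_walks {V : Type*} {G : Set (V × V)} {v x y : V} (hv : Reaches G v x)
    (hy : Reaches G y x) (hcut : ∀ e, Reaches G y e.1 → ∃ l, IsWalk G v x l ∧ e ∉ l) :
    ∃ l₁ l₂, IsWalk G y x l₁ ∧ IsWalk G v x l₂ ∧ l₁.Disjoint l₂ := by
  classical
  obtain ⟨ρ, hρ⟩ := hv.exists_shortestWalk
  obtain ⟨α, hα⟩ := (reaches_residualEdges hρ.1 hy hcut).exists_shortestWalk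
  -- `K` is `ρ` with the edges that `α` traverses backwards cancelled and its forward edges added;
  -- its net flow is that of `ρ` plus that of `α`, so it splits into a `v`-trail and a `y`-trail.
  set p : V × V → Prop := fun f => f ∈ G ∧ f ∉ ρ
  set Fwd := α.toFinset.filter p
  set Bwd := α.toFinset.filter fun f => ¬p f
  set K := (ρ.toFinset \ Bwd.image Prod.swap) ∪ Fwd
  have hBwd : Bwd.image Prod.swap ⊆ ρ.toFinset := by
    intro f hf
    obtain ⟨g, hg, rfl⟩ := Finset.mem_image.1 hf
    obtain ⟨hgα, hgp⟩ := Finset.mem_filter.1 hg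
    exact List.mem_toFinset.2 ((hα.1.mem (List.mem_toFinset.1 hgα)).resolve_left hgp)
  have hdisj : Disjoint (ρ.toFinset \ Bwd.image Prod.swap) Fwd := by
    rw [Finset.disjoint_left]
    intro f hf hfF
    exact (Finset.mem_filter.1 hfF).2.2 (List.mem_toFinset.1 (Finset.mem_sdiff.1 hf).1)
  have hKG : ↑K ⊆ G := by
    intro f hf
    rcases Finset.mem_union.1 hf with hf | hf
    · exact hρ.1.mem (List.mem_toFinset.1 (Finset.mem_sdiff.1 hf).1)
    · exact (Finset.mem_filter.1 hf).2.1
  have hK : netFlow K = (Pi.single v 1 - Pi.single x 1) + (Pi.single y 1 - Pi.single x 1) := by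
    rw [netFlow_union hdisj, netFlow_sdiff hBwd, netFlow_image_swap,
      hρ.1.netFlow_toFinset hρ.nodup, ← hα.1.netFlow_toFinset hα.nodup,
      ← netFlow_filter_add_filter_not α.toFinset p]
    abel
  obtain ⟨l₂, hl₂, hw₂⟩ := exists_nodup_walk_of_netFlow K (a := v) (x := x) fun z hz => by
    simp only [hK, Pi.add_apply, Pi.sub_apply, Pi.single_apply, if_neg hz]
    split_ifs <;> norm_num
  have hl₂K : l₂.toFinset ⊆ K := fun f hf => hw₂.mem (List.mem_toFinset.1 hf)
  obtain ⟨l₁, -, hw₁⟩ := exists_nodup_walk_of_netFlow (K \ l₂.toFinset) (a := y) (x := x)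
    fun z hz => by
      rw [netFlow_sdiff hl₂K, hK, hw₂.netFlow_toFinset hl₂]
      simp [Pi.single_eq_of_ne hz]
  refine ⟨l₁, l₂, hw₁.mono fun f hf => hKG (Finset.mem_sdiff.1 hf).1, hw₂.mono hKG,
    fun f hf₁ hf₂ => (Finset.mem_sdiff.1 (hw₁.mem hf₁)).2 (List.mem_toFinset.2 hf₂)⟩

theorem conn_iff_reaches {ω : Config d} {u x : Vert d} :
    Conn ω u x ↔ Reaches {e | Occ ω e} u x := by
  constructor
  · intro h
    induction h with
    | refl v => exact ⟨[], .nil v⟩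
    | step ho _ ih =>
      obtain ⟨l, hl⟩ := ih
      exact ⟨_, .cons ho hl⟩
  · rintro ⟨l, hl⟩
    induction hl with
    | nil v => exact .refl v
    | cons ho _ ih => exact .step ho ih

theorem connAvoid_iff_reaches {ω : Config d} {b : Bond d} {u x : Vert d} :
    ConnAvoid ω b u x ↔ Reaches {e | Occ ω e ∧ e ≠ b} u x := by
  constructor
  · intro h
    induction h with
    | refl v => exact ⟨[], .nil v⟩
    | step hne ho _ ih =>
      obtain ⟨l, hl⟩ := ih
      exact ⟨_, .cons ⟨ho, hne⟩ hl⟩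
  · rintro ⟨l, hl⟩
    induction hl with
    | nil v => exact .refl v
    | cons he _ ih => exact .step he.2 he.1 ih

theorem Conn.mono {ω ω' : Config d} (h : ∀ e, Occ ω e → Occ ω' e) {u x : Vert d}
    (hc : Conn ω u x) : Conn ω' u x := by
  induction hc with
  | refl v => exact .refl v
  | step ho _ ih => exact .step (h _ ho) ih

theorem occ_flipBond_false {ω : Config d} {b e : Bond d} :
    Occ (flipBond ω b false) e ↔ Occ ω e ∧ e ≠ b := by
  by_cases h : e = b <;> simp [Occ, flipBond, h]

theorem occ_flipBond_true {ω : Config d} {b e : Bond d} (h : Occ ω e) :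
    Occ (flipBond ω b true) e := by
  by_cases h' : e = b <;> simp_all [Occ, flipBond]

/-- A shortest path out of `b.2` never returns to `b.2`, so it does not use `b`. -/
theorem Conn.reaches_of_snd {ω : Config d} {b : Bond d} {x : Vert d} (h : Conn ω b.2 x) :
    Reaches {e | Occ ω e ∧ e ≠ b} b.2 x := by
  obtain ⟨l, hl⟩ := (conn_iff_reaches.1 h).exists_shortestWalk
  exact ⟨l, hl.1.restrict fun e he => ⟨hl.1.mem he, fun heb => hl.snd_ne e he (heb ▸ rfl)⟩⟩

theorem exists_walk_not_mem_of_not_pivotal {ω : Config d} {b e : Bond d} {x : Vert d}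
    (hc : Conn ω b.2 x) (hp : ¬Pivotal ω e b.2 x) :
    ∃ l, IsWalk {f | Occ ω f ∧ f ≠ b} b.2 x l ∧ e ∉ l := by
  have hc' : Conn (flipBond ω e false) b.2 x :=
    not_not.1 fun h => hp ⟨hc.mono fun _ => occ_flipBond_true, h⟩
  obtain ⟨l, hl⟩ := hc'.reaches_of_snd
  refine ⟨l, hl.restrict fun f hf => ⟨(occ_flipBond_false.1 (hl.mem hf).1).1, (hl.mem hf).2⟩,
    fun he => ?_⟩
  exact (occ_flipBond_false.1 (hl.mem he).1).2 rfl

theorem occursOn_connEvent {ω : Config d} {u x : Vert d} {l : List (Bond d)} {B : Set (Bond d)}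
    (hl : IsWalk {e | Occ ω e} u x l) (hB : ∀ e ∈ l, e ∈ B) : OccursOn (connEvent u x) B ω :=
  fun _ hω' => conn_iff_reaches.2 ⟨l, hl.restrict fun e he => (hω' e (hB e he)).trans (hl.mem he)⟩

/-- Inclusion (Esup): `E(b, x; C̃^b(y)) ⊆ {y → x} ∘ {b → x}`. -/
theorem stmt4 {d : ℕ} (b : Bond d) (x y : Vert d) :
    Eevent b x y ⊆ DisjOcc (connEvent y x) (bondConnEvent b x) := by
  rintro ω ⟨hb, hconn, hxy, hpiv⟩
  have hcut : ∀ e : Bond d, Reaches {f | Occ ω f ∧ f ≠ b} y e.1 →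
      ∃ l, IsWalk {f | Occ ω f ∧ f ≠ b} b.2 x l ∧ e ∉ l := fun e he =>
    exists_walk_not_mem_of_not_pivotal hconn fun hp => hpiv e hp (connAvoid_iff_reaches.2 he)
  obtain ⟨l₁, l₂, hl₁, hl₂, hdisj⟩ :=
    exists_disjoint_walks hconn.reaches_of_snd (connAvoid_iff_reaches.1 hxy) hcut
  refine ⟨{e | e ∈ l₁}, insert b {e | e ∈ l₂}, ?_, ?_, fun ω' hω' => ⟨?_, ?_⟩⟩
  · rw [Set.disjoint_left]
    rintro e he₁ (rfl | he₂)
    · exact (hl₁.mem he₁).2 rfl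
    · exact hdisj he₁ he₂
  · exact occursOn_connEvent (hl₁.mono fun _ he => he.1) fun _ => id
  · exact (hω' b (Set.mem_insert _ _)).trans hb
  · exact occursOn_connEvent (hl₂.mono fun _ he => he.1) (fun _ he => Set.mem_insert_of_mem b he)
      ω' hω'
end

section
/- Let φ, q : ℤ^{d+1} → ℝ≥0 with φ(o) = 1 (where o is the origin) and suppose φ(v) ≤ (q*φ)(v) for all v ≠ o, and φ is supported on nonnegative times. Define T = sup_x Σ_v (q*φ*φ)(v)·(q*φ)(x; v) where the kernels are translation-invariant, i.e., (q*φ)(x;v) = (q*φ)(v-x). Then Σ_{u,v} φ(u) φ(v-u) φ(v) ≤ 1 + 2T. -/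
open scoped ENNReal

/-!
Split `Σ_v (φ*φ)(v) φ(v)` at `v = o`. Since `φ` lives on positive times away from `o`, the
term `v = o` is `(φ*φ)(o) = φ(o)² = 1`. For `v ≠ o`, the bound `φ ≤ q*φ` off the origin gives
`(φ*φ)(v) ≤ φ(v) + ((q*φ)*φ)(v) ≤ 2 ((q*φ)*φ)(v)`, the first summand being the term `u = o`,
and `φ(v) ≤ (q*φ)(v)`; the resulting sum is the open triangle at `x = o`.
-/

section Convolution

variable {G : Type*} [AddCommGroup G]

noncomputable def discreteConv (f g : G → ℝ≥0∞) (v : G) : ℝ≥0∞ := ∑' w, f w * g (v - w)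

lemma discreteConv_self_zero_eq_one {φ : G → ℝ≥0∞} (hφo : φ 0 = 1)
    (hφneg : ∀ u ≠ 0, φ u * φ (-u) = 0) : discreteConv φ φ 0 = 1 := by
  rw [discreteConv, tsum_eq_single 0 fun u hu => by simpa using hφneg u hu]
  simp [hφo]

lemma le_discreteConv_of_apply_zero_eq_one {φ : G → ℝ≥0∞} (hφo : φ 0 = 1) (f : G → ℝ≥0∞)
    (v : G) : f v ≤ discreteConv f φ v := by
  simpa [discreteConv, hφo] using ENNReal.le_tsum (f := fun w => f w * φ (v - w)) v

lemma discreteConv_self_le_two_mul {φ q : G → ℝ≥0∞} (hφo : φ 0 = 1)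
    (hsub : ∀ v ≠ 0, φ v ≤ discreteConv q φ v) {v : G} (hv : v ≠ 0) :
    discreteConv φ φ v ≤ 2 * discreteConv (discreteConv q φ) φ v := by
  rw [discreteConv, ENNReal.tsum_eq_add_tsum_ite 0, two_mul]
  gcongr
  · simpa [hφo] using (hsub v hv).trans (le_discreteConv_of_apply_zero_eq_one hφo _ v)
  · refine ENNReal.tsum_le_tsum fun u => ?_
    split_ifs with hu
    · exact zero_le
    · exact mul_le_mul_left (hsub u hu) _

lemma tsum_tsum_bubble_eq (φ : G → ℝ≥0∞) :
    ∑' u, ∑' v, φ u * φ (v - u) * φ v = ∑' v, discreteConv φ φ v * φ v := by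
  rw [ENNReal.tsum_comm]
  simp only [discreteConv, ENNReal.tsum_mul_right]

noncomputable def openTriangle (q φ : G → ℝ≥0∞) (x : G) : ℝ≥0∞ :=
  ∑' v, discreteConv (discreteConv q φ) φ v * discreteConv q φ (v - x)

theorem tsum_bubble_le_one_add_two_mul_iSup_openTriangle {φ q : G → ℝ≥0∞} (hφo : φ 0 = 1)
    (hφneg : ∀ u ≠ 0, φ u * φ (-u) = 0) (hsub : ∀ v ≠ 0, φ v ≤ discreteConv q φ v) :
    ∑' u, ∑' v, φ u * φ (v - u) * φ v ≤ 1 + 2 * ⨆ x, openTriangle q φ x := by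
  classical
  have hterm (v : G) (hv : v ≠ 0) :
      discreteConv φ φ v * φ v ≤ 2 * (discreteConv (discreteConv q φ) φ v * discreteConv q φ v) :=
    (mul_le_mul' (discreteConv_self_le_two_mul hφo hsub hv) (hsub v hv)).trans_eq
      (mul_assoc _ _ _)
  rw [tsum_tsum_bubble_eq, ENNReal.tsum_eq_add_tsum_ite 0,
    discreteConv_self_zero_eq_one hφo hφneg, hφo, one_mul]
  gcongr
  calc ∑' v, (if v = 0 then 0 else discreteConv φ φ v * φ v)
      ≤ ∑' v, 2 * (discreteConv (discreteConv q φ) φ v * discreteConv q φ v) :=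
        ENNReal.tsum_le_tsum fun v => by
          split_ifs with hv
          · exact zero_le
          · exact hterm v hv
    _ = 2 * openTriangle q φ 0 := by simp only [openTriangle, sub_zero, ENNReal.tsum_mul_left]
    _ ≤ 2 * ⨆ x, openTriangle q φ x := by gcongr; exact le_iSup (openTriangle q φ) 0

end Convolution

lemma mul_apply_neg_eq_zero_of_time_support {E : Type*} [AddCommGroup E] {φ : E × ℤ → ℝ≥0∞}
    (hφsupp : ∀ v : E × ℤ, v.2 < 0 → φ v = 0) (hφ0 : ∀ v : E × ℤ, v.2 = 0 → v ≠ 0 → φ v = 0)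
    {u : E × ℤ} (hu : u ≠ 0) : φ u * φ (-u) = 0 := by
  rcases lt_trichotomy u.2 0 with h | h | h
  · simp [hφsupp u h]
  · simp [hφ0 u h hu]
  · simp [hφsupp (-u) (by simpa using h)]

theorem stmt11_general (d : ℕ) (φ q : ((Fin d → ℤ) × ℤ) → ℝ≥0∞)
    (hφo : φ 0 = 1)
    (hφsupp : ∀ v : (Fin d → ℤ) × ℤ, v.2 < 0 → φ v = 0)
    (hφ0 : ∀ v : (Fin d → ℤ) × ℤ, v.2 = 0 → v ≠ 0 → φ v = 0)
    (hsub : ∀ v : (Fin d → ℤ) × ℤ, v ≠ 0 → φ v ≤ ∑' w, q w * φ (v - w)) :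
    ∑' u : (Fin d → ℤ) × ℤ, ∑' v : (Fin d → ℤ) × ℤ, φ u * φ (v - u) * φ v ≤
      1 + 2 * ⨆ x : (Fin d → ℤ) × ℤ, ∑' v : (Fin d → ℤ) × ℤ,
        (∑' w, (∑' z, q z * φ (w - z)) * φ (v - w)) * (∑' w, q w * φ (v - x - w)) :=
  tsum_bubble_le_one_add_two_mul_iSup_openTriangle hφo
    (fun _ hu => mul_apply_neg_eq_zero_of_time_support hφsupp hφ0 hu) hsub

/-- The bound (T0bd) with `m = 1`: for a two-point function `φ` with `φ(o) = 1`,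
supported on nonnegative times (and at time zero only at the origin), a one-step kernel
`q`, and `φ(v) ≤ (q*φ)(v)` for `v ≠ o`, one has
`Σ_{u,v} φ(u) φ(v-u) φ(v) ≤ 1 + 2T` where
`T = sup_x Σ_v (q*φ*φ)(v) · (q*φ)(v - x)` is the open triangle. -/
theorem stmt11 (d : ℕ) (φ q : ((Fin d → ℤ) × ℤ) → ℝ≥0∞)
    (hφo : φ 0 = 1)
    (hφsupp : ∀ v : (Fin d → ℤ) × ℤ, v.2 < 0 → φ v = 0)
    (hφ0 : ∀ v : (Fin d → ℤ) × ℤ, v.2 = 0 → v ≠ 0 → φ v = 0)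
    (hq : ∀ v : (Fin d → ℤ) × ℤ, v.2 ≠ 1 → q v = 0)
    (hsub : ∀ v : (Fin d → ℤ) × ℤ, v ≠ 0 → φ v ≤ ∑' w, q w * φ (v - w)) :
    ∑' u : (Fin d → ℤ) × ℤ, ∑' v : (Fin d → ℤ) × ℤ, φ u * φ (v - u) * φ v ≤
      1 + 2 * ⨆ x : (Fin d → ℤ) × ℤ, ∑' v : (Fin d → ℤ) × ℤ,
        (∑' w, (∑' z, q z * φ (w - z)) * φ (v - w)) * (∑' w, q w * φ (v - x - w)) :=
  stmt11_general d φ q hφo hφsupp hφ0 hsub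
end

section
/- In oriented percolation, for bonds b', b with b temporally after b', and vertices y, x: the event E(b', x; C̃^{b'}(y)) ∩ {b ∈ piv(b̄', x)} is contained in the disjoint-occurrence event {y → x} ∘ {b' → b → x}, where {b' → b → x} denotes the event that b' and b are occupied and there are occupied paths b̄' → b̲ and b̄ → x. -/
open MeasureTheory
open scoped ENNReal

variable {d : ℕ}

/-- The event `{b' → b → x}`: `b'` and `b` are occupied with occupied paths
`b̄' → b̲` and `b̄ → x`. -/
def bondBondConnEvent (b' b : Bond d) (x : Vert d) : Set (Config d) :=
  {ω | Occ ω b' ∧ Conn ω b'.2 b.1 ∧ Occ ω b ∧ Conn ω b.2 x}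

/-!
A bond `b` pivotal for `b̄' → x` splits every occupied path `b̄' → x` into paths `b̄' → b̲` and
`b̄ → x` avoiding `b`. With `b'` and `b` closed, both `y` and `b̄` still reach `x`, and no single
bond `g` cuts both connections: such a `g` would be pivotal for `b̄' → x` with `g̲ ∈ C̃^{b'}(y)`.
The two-source edge version of Menger's theorem (one augmenting-path step of the max-flow
argument, with flows counted across vertex sets) then gives bond-disjoint paths `y → x` and
`b̄ → x`. The first one also misses the cluster of `b̄'` off `b`, since otherwise `b̄'` would
reach `x` without `b`.
-/

open Relation Finset

section Menger

open Classical

variable {V : Type*} {H K : Set (V × V)} {s t u v x y : V}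

def Reach (H : Set (V × V)) : V → V → Prop := ReflTransGen fun u v => (u, v) ∈ H

theorem Reach.refl (H : Set (V × V)) (v : V) : Reach H v v := ReflTransGen.refl

theorem Reach.head (he : (u, v) ∈ H) (h : Reach H v t) : Reach H u t :=
  ReflTransGen.head he h

theorem Reach.tail (h : Reach H s u) (he : (u, v) ∈ H) : Reach H s v :=
  ReflTransGen.tail h he

theorem Reach.trans (h₁ : Reach H s u) (h₂ : Reach H u t) : Reach H s t :=
  ReflTransGen.trans h₁ h₂

theorem Reach.mono (hHK : H ⊆ K) (h : Reach H u v) : Reach K u v :=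
  ReflTransGen.mono (fun _ _ he => hHK he) _ _ h

theorem Reach.mem_of_not_reach_sdiff_singleton {e : V × V} (h : Reach H u v)
    (he : ¬ Reach (H \ {e}) u v) : e ∈ H := by
  by_contra heH
  exact he (by rwa [Set.sdiff_singleton_eq_self heH])

theorem Reach.exists_crossing {R : Set V} (h : Reach H u v) (hu : u ∈ R) (hv : v ∉ R) :
    ∃ e ∈ H, e.1 ∈ R ∧ e.2 ∉ R := by
  induction h with
  | refl => exact absurd hu hv
  | @tail w z _ hwz ih =>
    by_cases hw : w ∈ R
    · exact ⟨(w, z), hwz, hw, hv⟩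
    · exact ih hw

theorem Reach.split (e : V × V) (h : Reach H u v) :
    Reach (H \ {e}) u v ∨ Reach (H \ {e}) u e.1 ∧ Reach (H \ {e}) e.2 v := by
  induction h using ReflTransGen.head_induction_on with
  | refl => exact .inl (.refl _ _)
  | @head w z hwz _ ih =>
    by_cases hwe : (w, z) = e
    · subst hwe
      refine .inr ⟨.refl _ _, ih.elim id And.right⟩
    · have hwz' : (w, z) ∈ H \ {e} := ⟨hwz, hwe⟩
      exact ih.imp (Reach.head hwz') (And.imp_left (Reach.head hwz'))

theorem Reach.restrict_source (h : Reach H u v) : Reach {e ∈ H | Reach H u e.1} u v := by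
  induction h with
  | refl => exact .refl _ _
  | tail hw hwz ih => exact ih.tail ⟨hwz, hw⟩

theorem Reach.restrict_target (h : Reach H u v) : Reach {e ∈ H | Reach H e.2 v} u v := by
  induction h using ReflTransGen.head_induction_on with
  | refl => exact .refl _ _
  | head hwz hz ih => exact Reach.head ⟨hwz, hz⟩ ih

inductive IsWalk_s15 (H : Set (V × V)) : V → List (V × V) → V → Prop
  | nil (v : V) : IsWalk_s15 H v [] v
  | cons {e : V × V} {l : List (V × V)} {t : V} :
      e ∈ H → IsWalk_s15 H e.2 l t → IsWalk_s15 H e.1 (e :: l) t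

theorem IsWalk_s15.reach {L : List (V × V)} (h : IsWalk_s15 H s L t) : Reach {e | e ∈ L} s t := by
  induction h with
  | nil => exact .refl _ _
  | cons _ _ ih =>
    exact Reach.head (List.mem_cons_self ..) (ih.mono fun _ => List.mem_cons_of_mem _)

theorem IsWalk_s15.subset {L : List (V × V)} (h : IsWalk_s15 H s L t) : ∀ e ∈ L, e ∈ H := by
  induction h with
  | nil => simp
  | cons he _ ih => exact List.forall_mem_cons.2 ⟨he, ih⟩

theorem Reach.exists_isWalk (h : Reach H s t) : ∃ L, IsWalk_s15 H s L t := by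
  induction h using ReflTransGen.head_induction_on with
  | refl => exact ⟨[], .nil _⟩
  | head he _ ih =>
    obtain ⟨L, hL⟩ := ih
    exact ⟨_ :: L, .cons he hL⟩

theorem IsWalk_s15.exists_of_append {L₁ L₂ : List (V × V)} (h : IsWalk_s15 H s (L₁ ++ L₂) t) :
    ∃ m, IsWalk_s15 H m L₂ t := by
  induction L₁ generalizing s with
  | nil => exact ⟨s, h⟩
  | cons e l ih =>
    cases h with
    | cons _ h => exact ih h

theorem IsWalk_s15.exists_nodup {L : List (V × V)} (h : IsWalk_s15 H s L t) :
    ∃ M, IsWalk_s15 H s M t ∧ M.Nodup := by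
  induction h with
  | nil v => exact ⟨[], .nil v, List.nodup_nil⟩
  | @cons e l t he _ ih =>
    obtain ⟨M, hM, hnd⟩ := ih
    by_cases heM : e ∈ M
    · obtain ⟨M₁, M₂, rfl⟩ := List.append_of_mem heM
      obtain ⟨m, hm⟩ := hM.exists_of_append
      cases hm with
      | cons he' hM₂ => exact ⟨_, .cons he' hM₂, hnd.sublist (List.sublist_append_right _ _)⟩
    · exact ⟨e :: M, .cons he hM, List.nodup_cons.2 ⟨heM, hnd⟩⟩

noncomputable def flux (F : Finset (V × V)) (R : Set V) : ℤ :=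
  ∑ e ∈ F, (R.indicator 1 e.1 - R.indicator 1 e.2)

theorem IsWalk_s15.sum_map_indicator {L : List (V × V)} (h : IsWalk_s15 H s L t) (R : Set V) :
    (L.map fun e => R.indicator (1 : V → ℤ) e.1 - R.indicator 1 e.2).sum =
      R.indicator 1 s - R.indicator 1 t := by
  induction h with
  | nil => simp
  | cons _ _ ih => rw [List.map_cons, List.sum_cons, ih]; ring

theorem Reach.exists_finset_flux (h : Reach H s t) :
    ∃ W : Finset (V × V), ↑W ⊆ H ∧ Reach ↑W s t ∧
      ∀ R, flux W R = R.indicator 1 s - R.indicator 1 t := by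
  obtain ⟨L, hL⟩ := h.exists_isWalk
  obtain ⟨M, hM, hnd⟩ := hL.exists_nodup
  refine ⟨M.toFinset, fun e he => hM.subset e (List.mem_toFinset.1 he), ?_, fun R => ?_⟩
  · exact hM.reach.mono fun e he => List.mem_toFinset.2 he
  · rw [flux, List.sum_toFinset _ hnd, hM.sum_map_indicator]

theorem flux_union {A B : Finset (V × V)} (h : Disjoint A B) (R : Set V) :
    flux (A ∪ B) R = flux A R + flux B R :=
  sum_union h

theorem flux_sdiff {A B : Finset (V × V)} (h : B ⊆ A) (R : Set V) :
    flux (A \ B) R = flux A R - flux B R :=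
  eq_sub_of_add_eq (sum_sdiff h)

theorem flux_image_swap (A : Finset (V × V)) (R : Set V) :
    flux (A.image Prod.swap) R = -flux A R := by
  rw [flux, sum_image Prod.swap_injective.injOn, flux, ← sum_neg_distrib]
  simp

theorem flux_filter_add_flux_filter_not (A : Finset (V × V)) (p : V × V → Prop) [DecidablePred p]
    (R : Set V) :
    flux (A.filter p) R + flux (A.filter (¬ p ·)) R = flux A R :=
  sum_filter_add_sum_filter_not A p _

theorem flux_nonpos_of_closed {F : Finset (V × V)} {R : Set V}
    (h : ∀ e ∈ F, e.1 ∈ R → e.2 ∈ R) : flux F R ≤ 0 := by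
  refine sum_nonpos fun e he => ?_
  by_cases h1 : e.1 ∈ R
  · simp [h1, h e he h1]
  · simp only [Set.indicator_of_notMem h1, zero_sub, Left.neg_nonpos_iff]
    exact Set.indicator_nonneg (fun _ _ => zero_le_one) _

theorem flux_eq_card_leaving {F : Finset (V × V)} {R : Set V}
    (h : ∀ e ∈ F, e.2 ∈ R → e.1 ∈ R) : flux F R = #{e ∈ F | e.1 ∈ R ∧ e.2 ∉ R} := by
  rw [natCast_card_filter, flux]
  refine sum_congr rfl fun e he => ?_
  by_cases h2 : e.2 ∈ R
  · simp [h2, h e he h2]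
  · by_cases h1 : e.1 ∈ R <;> simp [h1, h2]

theorem reach_of_flux_pos {F : Finset (V × V)} (h : ∀ R, s ∈ R → x ∉ R → 0 < flux F R) :
    Reach ↑F s x := by
  by_contra hsx
  have hclosed : ∀ e ∈ F, e.1 ∈ {v | Reach ↑F s v} → e.2 ∈ {v | Reach ↑F s v} :=
    fun e he hs => hs.tail he
  exact (h _ (Reach.refl _ s) hsx).not_ge (flux_nonpos_of_closed hclosed)

theorem exists_disjoint_reach_of_flux {F : Finset (V × V)}
    (hF : ∀ R, flux F R = R.indicator 1 s + R.indicator 1 y - 2 * R.indicator 1 x) :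
    ∃ B₁ B₂ : Finset (V × V), B₁ ⊆ F ∧ B₂ ⊆ F ∧ Disjoint B₁ B₂ ∧
      Reach ↑B₁ y x ∧ Reach ↑B₂ s x := by
  have hs : Reach ↑F s x := reach_of_flux_pos fun R hs hx => by
    rw [hF]
    simp only [Set.indicator_of_mem hs, Set.indicator_of_notMem hx, Pi.one_apply]
    linarith [Set.indicator_nonneg (fun _ _ => zero_le_one) y (s := R) (f := (1 : V → ℤ))]
  obtain ⟨W, hWF, hW, hWflux⟩ := hs.exists_finset_flux
  have hWF : W ⊆ F := coe_subset.1 hWF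
  refine ⟨F \ W, W, sdiff_subset, hWF, disjoint_sdiff_self_left, ?_, hW⟩
  refine reach_of_flux_pos fun R hy hx => ?_
  rw [flux_sdiff hWF, hF, hWflux]
  simp [Set.indicator_of_mem hy, Set.indicator_of_notMem hx]

def residualGraph (H : Set (V × V)) (P : Finset (V × V)) : Set (V × V) :=
  H \ ↑P ∪ Prod.swap ⁻¹' ↑P

theorem exists_flux_of_reach_residual {P : Finset (V × V)} (hPH : ↑P ⊆ H)
    (hP : ∀ R, flux P R = R.indicator 1 s - R.indicator 1 x)
    (hres : Reach (residualGraph H P) y x) :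
    ∃ F : Finset (V × V), ↑F ⊆ H ∧
      ∀ R, flux F R = R.indicator 1 s + R.indicator 1 y - 2 * R.indicator 1 x := by
  obtain ⟨A, hAres, -, hA⟩ := hres.exists_finset_flux
  set A₁ := A.filter (· ∈ H \ ↑P)
  set A₂ := A.filter (· ∉ H \ ↑P)
  have hA₂ : A₂.image Prod.swap ⊆ P := by
    simp only [subset_iff, mem_image, mem_filter, A₂]
    rintro _ ⟨e, ⟨heA, heH⟩, rfl⟩
    exact (hAres heA).resolve_left heH
  have hdisj : Disjoint (P \ A₂.image Prod.swap) A₁ := by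
    simp only [disjoint_left, mem_sdiff, mem_filter, A₁]
    exact fun e heP heA₁ => heA₁.2.2 heP.1
  refine ⟨P \ A₂.image Prod.swap ∪ A₁, ?_, fun R => ?_⟩
  · simp only [coe_union, Set.union_subset_iff, coe_sdiff, coe_filter, A₁]
    exact ⟨Set.sdiff_subset.trans hPH, fun e he => he.2.1⟩
  · have hsplit : flux A₁ R + flux A₂ R = flux A R :=
      flux_filter_add_flux_filter_not A (· ∈ H \ ↑P) R
    rw [hA] at hsplit
    rw [flux_union hdisj, flux_sdiff hA₂, flux_image_swap, hP]
    linarith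

theorem exists_common_cut_of_not_reach_residual {P : Finset (V × V)}
    (hP : ∀ R, flux P R = R.indicator 1 s - R.indicator 1 x) (hy : Reach H y x)
    (hres : ¬ Reach (residualGraph H P) y x) :
    ∃ g, ¬ Reach (H \ {g}) y x ∧ ¬ Reach (H \ {g}) s x := by
  set R := {v | Reach (residualGraph H P) y v}
  have hleave : ∀ e ∈ H, e.1 ∈ R → e.2 ∉ R → e ∈ P := fun e he h1 h2 => by
    by_contra heP
    exact h2 (h1.tail (.inl ⟨he, heP⟩))
  have henter : ∀ e ∈ P, e.2 ∈ R → e.1 ∈ R := fun e he h2 => h2.tail (.inr he)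
  have hyR : y ∈ R := Reach.refl _ y
  have hxR : x ∉ R := hres
  obtain ⟨g, hgH, hg1, hg2⟩ := hy.exists_crossing hyR hxR
  have hcard := flux_eq_card_leaving henter
  rw [hP, Set.indicator_of_notMem hxR] at hcard
  have hgP : g ∈ {e ∈ P | e.1 ∈ R ∧ e.2 ∉ R} := mem_filter.2 ⟨hleave g hgH hg1 hg2, hg1, hg2⟩
  -- `P` carries one unit of flow and never enters `R`, so it leaves `R` only through `g`
  have hle : #{e ∈ P | e.1 ∈ R ∧ e.2 ∉ R} ≤ 1 := by
    have := Set.indicator_le_self' (s := R) (f := (1 : V → ℤ)) (fun _ _ => zero_le_one) s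
    simp only [Pi.one_apply] at this
    omega
  have hs : s ∈ R := by
    by_contra hs
    rw [Set.indicator_of_notMem hs] at hcard
    have := card_pos.2 ⟨g, hgP⟩
    omega
  have hcut : ∀ {u}, u ∈ R → ¬ Reach (H \ {g}) u x := fun hu hux => by
    obtain ⟨e, ⟨heH, heg⟩, he1, he2⟩ := hux.exists_crossing hu hxR
    exact heg (card_le_one.1 hle e (mem_filter.2 ⟨hleave e heH he1 he2, he1, he2⟩) g hgP)
  exact ⟨g, hcut hyR, hcut hs⟩

theorem exists_disjoint_reach (hy : Reach H y x) (hs : Reach H s x)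
    (hcut : ∀ g, Reach (H \ {g}) y x ∨ Reach (H \ {g}) s x) :
    ∃ B₁ B₂ : Set (V × V), B₁ ⊆ H ∧ B₂ ⊆ H ∧ Disjoint B₁ B₂ ∧ Reach B₁ y x ∧ Reach B₂ s x := by
  obtain ⟨P, hPH, -, hP⟩ := hs.exists_finset_flux
  by_cases hres : Reach (residualGraph H P) y x
  · obtain ⟨F, hFH, hF⟩ := exists_flux_of_reach_residual hPH hP hres
    obtain ⟨B₁, B₂, h₁, h₂, hdisj, hB₁, hB₂⟩ := exists_disjoint_reach_of_flux hF
    exact ⟨B₁, B₂, (coe_subset.2 h₁).trans hFH, (coe_subset.2 h₂).trans hFH,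
      disjoint_coe.2 hdisj, hB₁, hB₂⟩
  · obtain ⟨g, hgy, hgs⟩ := exists_common_cut_of_not_reach_residual hP hy hres
    exact ((hcut g).elim hgy hgs).elim

end Menger

section Pivotal

variable {V : Type*} {O : Set (V × V)} {b' b : V × V} {x y : V}

theorem no_common_cut_of_pivotal
    (hcut : ∀ g, ¬ Reach (O \ {g}) b'.2 x → ¬ Reach (O \ {b'}) y g.1)
    (hb : ¬ Reach (O \ {b}) b'.2 x) (hyx : Reach ((O \ {b'}) \ {b}) y x) (g : V × V) :
    Reach (((O \ {b'}) \ {b}) \ {g}) y x ∨ Reach (((O \ {b'}) \ {b}) \ {g}) b.2 x := by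
  by_contra! ⟨hny, hns⟩
  refine hcut g (fun hg => ?_) ?_
  · rcases hg.split b with h | ⟨-, h⟩
    · exact hb (h.mono (by tauto_set))
    rcases h.split b' with h | ⟨-, h⟩
    · exact hns (h.mono (by tauto_set))
    · exact hb (h.mono (by tauto_set))
  · rcases hyx.split g with h | ⟨h, -⟩
    · exact (hny h).elim
    · exact h.mono (by tauto_set)

theorem exists_disjoint_reach_through_pivotal (hb'O : b' ∈ O) (hCx : Reach O b'.2 x)
    (hyx : Reach (O \ {b'}) y x)
    (hcut : ∀ g, ¬ Reach (O \ {g}) b'.2 x → ¬ Reach (O \ {b'}) y g.1)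
    (hb : ¬ Reach (O \ {b}) b'.2 x) :
    ∃ B₁ B₂ : Set (V × V), B₁ ⊆ O ∧ B₂ ⊆ O ∧ Disjoint B₁ B₂ ∧ Reach B₁ y x ∧
      b' ∈ B₂ ∧ b ∈ B₂ ∧ Reach B₂ b'.2 b.1 ∧ Reach B₂ b.2 x := by
  have hbO := hCx.mem_of_not_reach_sdiff_singleton hb
  obtain ⟨hb'b, hbx⟩ := (hCx.split b).resolve_left hb
  have hyν : Reach ((O \ {b'}) \ {b}) y x :=
    (hyx.split b).resolve_right fun h => hcut b hb (h.1.mono Set.sdiff_subset)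
  have hbν : Reach ((O \ {b'}) \ {b}) b.2 x := by
    rw [Set.sdiff_sdiff_comm]
    exact (hbx.split b').resolve_right fun h => hb (h.2.mono Set.sdiff_subset)
  obtain ⟨B₁, B₂, hB₁ν, hB₂ν, hdisj, hB₁, hB₂⟩ :=
    exists_disjoint_reach hyν hbν (no_common_cut_of_pivotal hcut hb hyν)
  -- keep only the bonds of `B₁` from which `x` is reached, and route `b̄' → b̲` through the
  -- cluster of `b̄'` off `b`: a shared bond would connect `b̄'` to `x` off `b`
  set B₁' := {e ∈ B₁ | Reach B₁ e.2 x}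
  set B₃ := {e ∈ O \ {b} | Reach (O \ {b}) b'.2 e.1}
  refine ⟨B₁', insert b' (insert b (B₂ ∪ B₃)), ?_, ?_, ?_, hB₁.restrict_target,
    Set.mem_insert _ _, Set.mem_insert_of_mem _ (Set.mem_insert _ _), ?_, ?_⟩
  · exact fun e he => (hB₁ν he.1).1.1
  · exact Set.insert_subset hb'O (Set.insert_subset hbO
      (Set.union_subset (fun e he => (hB₂ν he).1.1) fun e he => he.1.1))
  · rw [Set.disjoint_left]
    rintro e ⟨he₁, hex⟩ (rfl | rfl | he₂ | ⟨heO, hre⟩)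
    · exact (hB₁ν he₁).1.2 rfl
    · exact (hB₁ν he₁).2 rfl
    · exact Set.disjoint_left.1 hdisj he₁ he₂
    · refine hb (hre.trans ((Reach.head he₁ hex).mono fun f hf => ?_))
      exact ⟨(hB₁ν hf).1.1, (hB₁ν hf).2⟩
  · exact hb'b.restrict_source.mono (by tauto_set)
  · exact hB₂.mono (by tauto_set)

end Pivotal

section Percolation

variable {ω ω' : Config d} {b : Bond d} {u v : Vert d}

def occupied (ω : Config d) : Set (Bond d) := {e | Occ ω e}

theorem conn_iff_reach : Conn ω u v ↔ Reach (occupied ω) u v := by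
  refine ⟨fun h => ?_, fun h => ?_⟩
  · induction h with
    | refl => exact .refl _ _
    | step he _ ih => exact Reach.head he ih
  · induction h using ReflTransGen.head_induction_on with
    | refl => exact .refl _
    | head he _ ih => exact .step he ih

theorem connAvoid_iff_reach : ConnAvoid ω b u v ↔ Reach (occupied ω \ {b}) u v := by
  refine ⟨fun h => ?_, fun h => ?_⟩
  · induction h with
    | refl => exact .refl _ _
    | step hne he _ ih => exact Reach.head ⟨he, hne⟩ ih
  · induction h using ReflTransGen.head_induction_on with
    | refl => exact .refl _
    | head he _ ih => exact .step he.2 he.1 ih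

theorem occupied_flipBond_true : occupied (flipBond ω b true) = insert b (occupied ω) := by
  ext e
  by_cases h : e = b <;> simp [occupied, Occ, flipBond, h]

theorem occupied_flipBond_false : occupied (flipBond ω b false) = occupied ω \ {b} := by
  ext e
  by_cases h : e = b <;> simp [occupied, Occ, flipBond, h]

theorem conn_of_agree {B : Set (Bond d)} (hB : B ⊆ occupied ω) (h : Reach B u v)
    (hω' : ∀ e ∈ B, ω' e = ω e) : Conn ω' u v :=
  conn_iff_reach.2 (h.mono fun e he => (hω' e he).trans (hB he))

end Percolation

theorem stmt15_general {d : ℕ} (b' b : Bond d) (x y : Vert d) :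
    Eevent b' x y ∩ {ω | Pivotal ω b b'.2 x} ⊆
      DisjOcc (connEvent y x) (bondBondConnEvent b' b x) := by
  rintro ω ⟨⟨hb'ω, hCx, hyx, hpiv⟩, -, hb⟩
  rw [conn_iff_reach] at hCx
  have hcut : ∀ g, ¬ Reach (occupied ω \ {g}) b'.2 x → ¬ Reach (occupied ω \ {b'}) y g.1 :=
    fun g hg hyg => hpiv g
      ⟨conn_iff_reach.2 (hCx.mono (occupied_flipBond_true ▸ Set.subset_insert _ _)),
        by rwa [conn_iff_reach, occupied_flipBond_false]⟩
      (connAvoid_iff_reach.2 hyg)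
  rw [conn_iff_reach, occupied_flipBond_false] at hb
  obtain ⟨B₁, B₂, hB₁ω, hB₂ω, hdisj, hB₁, hb'B, hbB, hB₂, hB₂'⟩ :=
    exists_disjoint_reach_through_pivotal hb'ω hCx (connAvoid_iff_reach.1 hyx) hcut hb
  refine ⟨B₁, B₂, hdisj, fun ω' hω' => conn_of_agree hB₁ω hB₁ hω', fun ω' hω' => ?_⟩
  exact ⟨(hω' b' hb'B).trans (hB₂ω hb'B), conn_of_agree hB₂ω hB₂ hω',
    (hω' b hbB).trans (hB₂ω hbB), conn_of_agree hB₂ω hB₂' hω'⟩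

/-- Inclusion (Epivsup): for `b` temporally after `b'`,
`E(b', x; C̃^{b'}(y)) ∩ {b ∈ piv(b̄', x)} ⊆ {y → x} ∘ {b' → b → x}`. -/
theorem stmt15 {d : ℕ} (b' b : Bond d) (x y : Vert d) (hb : b'.1.2 < b.1.2) :
    Eevent b' x y ∩ {ω | Pivotal ω b b'.2 x} ⊆
      DisjOcc (connEvent y x) (bondBondConnEvent b' b x) :=
  stmt15_general b' b x y
end
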